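/- Let R be a commutative ring and let g ∈ R⟦X⟧ be an odd formal power series with coefficient 1 in degree 1. Then for every even formal power series h ∈ R⟦X⟧ there exists a unique Q ∈ R⟦T⟧ such that h = Q∘(g²), where Q∘(g²) denotes the formal substitution of g² (which has zero constant term) into Q; moreover the constant term of Q equals the constant term of h. -/

import Mathlib

open PowerSeries

/-- Formal substitution of a one-variable power series `g` (assumed to have zero
constant term) into a one-variable power series `P`: the coefficient of degree `n`
in `P∘g` only involves the powers `g ^ k` for `k ≤ n`, since `g ^ k` has order at
least `k`. -/
noncomputable def PowerSeries.substPS {R : Type*} [CommSemiring R]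
    (g : PowerSeries R) (P : PowerSeries R) : PowerSeries R :=
  PowerSeries.mk fun n => ∑ k ∈ Finset.range (n + 1),
    PowerSeries.coeff k P * PowerSeries.coeff n (g ^ k)

/-!
Write `f = g²`. Since `g = X + (odd terms)`, the power `f ^ k = g ^ (2k)` is even, vanishes below
degree `2k` and has coefficient `1` in degree `2k`. Hence `h = Q∘f` is vacuous in odd degrees and,
in degree `2m`, reads `∑_{k ≤ m} Q_k [X^{2m}] f^k = [X^{2m}] h`: a lower unitriangular system in
the coefficients of `Q`, which forward substitution solves uniquely. Its first equation is
`Q_0 = h_0`.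
-/

open Finset

section ForwardSubst

variable {R : Type*} [Ring R] (a : ℕ → ℕ → R) (b : ℕ → R)

noncomputable def forwardSubst : ℕ → R
  | m => b m - ∑ k : Fin m, forwardSubst k * a k m

theorem forwardSubst_eq (m : ℕ) :
    forwardSubst a b m = b m - ∑ k ∈ range m, forwardSubst a b k * a k m := by
  rw [forwardSubst, Fin.sum_univ_eq_sum_range (fun k => forwardSubst a b k * a k m)]

theorem existsUnique_forall_sum_range_succ_mul_eq (ha : ∀ m, a m m = 1) :
    ∃! c : ℕ → R, ∀ m, ∑ k ∈ range (m + 1), c k * a k m = b m := by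
  simp_rw [sum_range_succ, ha, mul_one, ← eq_sub_iff_add_eq']
  refine ⟨forwardSubst a b, forwardSubst_eq a b, fun c hc => funext fun m => ?_⟩
  induction m using Nat.strong_induction_on with
  | _ m ih =>
    rw [hc, forwardSubst_eq]
    congr 1
    exact sum_congr rfl fun k hk => by rw [ih k (mem_range.1 hk)]

end ForwardSubst

section Parity

variable {R : Type*} [Semiring R] {d : ℕ}

theorem coeff_mul_eq_zero_of_natCast_ne {p q : R⟦X⟧} {i j : ZMod d}
    (hp : ∀ n : ℕ, (n : ZMod d) ≠ i → coeff n p = 0)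
    (hq : ∀ n : ℕ, (n : ZMod d) ≠ j → coeff n q = 0)
    {n : ℕ} (hn : (n : ZMod d) ≠ i + j) : coeff n (p * q) = 0 := by
  rw [coeff_mul]
  refine sum_eq_zero fun x hx => ?_
  rw [HasAntidiagonal.mem_antidiagonal] at hx
  by_cases hi : (x.1 : ZMod d) = i
  · have hj : (x.2 : ZMod d) ≠ j := fun hj => hn (by rw [← hx, Nat.cast_add, hi, hj])
    rw [hq _ hj, mul_zero]
  · rw [hp _ hi, zero_mul]

theorem coeff_pow_eq_zero_of_natCast_ne {p : R⟦X⟧} {i : ZMod d}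
    (hp : ∀ n : ℕ, (n : ZMod d) ≠ i → coeff n p = 0) (k : ℕ)
    {n : ℕ} (hn : (n : ZMod d) ≠ k * i) : coeff n (p ^ k) = 0 := by
  induction k generalizing n with
  | zero =>
    rw [pow_zero, coeff_one, if_neg]
    rintro rfl
    simp at hn
  | succ k ih =>
    rw [pow_succ]
    exact coeff_mul_eq_zero_of_natCast_ne (fun _ => ih) hp (by rwa [Nat.cast_succ, add_one_mul] at hn)

end Parity

section Order

variable {R : Type*} [CommSemiring R] {g : R⟦X⟧}

theorem coeff_pow_eq_zero_of_lt (hg : constantCoeff g = 0) {k n : ℕ} (hn : n < k) :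
    coeff n (g ^ k) = 0 := by
  obtain ⟨u, rfl⟩ := X_dvd_iff.2 hg
  rw [mul_pow, coeff_X_pow_mul', if_neg (by omega)]

theorem coeff_self_pow (hg : constantCoeff g = 0) (k : ℕ) :
    coeff k (g ^ k) = coeff 1 g ^ k := by
  obtain ⟨u, rfl⟩ := X_dvd_iff.2 hg
  rw [mul_pow, coeff_X_pow_mul', if_pos le_rfl, Nat.sub_self, coeff_zero_eq_constantCoeff,
    map_pow, ← zero_add 1, coeff_succ_X_mul, coeff_zero_eq_constantCoeff]

end Order

section Substitution

variable {R : Type*} [CommSemiring R]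

theorem coeff_substPS_eq_zero_of_natCast_ne {d : ℕ} {f : R⟦X⟧}
    (hf : ∀ n : ℕ, (n : ZMod d) ≠ 0 → coeff n f = 0) (P : R⟦X⟧) {n : ℕ}
    (hn : (n : ZMod d) ≠ 0) : coeff n (substPS f P) = 0 := by
  rw [substPS, coeff_mk]
  exact sum_eq_zero fun k _ => by
    rw [coeff_pow_eq_zero_of_natCast_ne hf k (by rwa [mul_zero]), mul_zero]

theorem coeff_two_mul_substPS_sq {g : R⟦X⟧} (hg : constantCoeff g = 0) (P : R⟦X⟧) (m : ℕ) :
    coeff (2 * m) (substPS (g ^ 2) P) =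
      ∑ k ∈ range (m + 1), coeff k P * coeff (2 * m) (g ^ (2 * k)) := by
  rw [substPS, coeff_mk]
  simp_rw [← pow_mul, mul_comm 2]
  refine (sum_subset (range_subset_range.2 (by omega)) fun k hk hkm => ?_).symm
  rw [mem_range] at hk hkm
  rw [coeff_pow_eq_zero_of_lt hg (by omega), mul_zero]

end Substitution

theorem eq_substPS_sq_iff {R : Type*} [CommRing R] {g h : R⟦X⟧}
    (hgodd : ∀ n, Even n → coeff n g = 0) (hheven : ∀ n, Odd n → coeff n h = 0) (Q : R⟦X⟧) :
    h = substPS (g ^ 2) Q ↔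
      ∀ m, ∑ k ∈ range (m + 1), coeff k Q * coeff (2 * m) (g ^ (2 * k)) = coeff (2 * m) h := by
  have hg0 : constantCoeff g = 0 := by simpa using hgodd 0 Even.zero
  have hsq_even : ∀ n : ℕ, (n : ZMod 2) ≠ 0 → coeff n (g ^ 2) = 0 := by
    refine fun n hn => coeff_pow_eq_zero_of_natCast_ne (i := (1 : ZMod 2)) (fun n hn => hgodd n ?_) 2 ?_
    · rwa [Ne, ZMod.natCast_eq_one_iff_odd, Nat.not_odd_iff_even] at hn
    · rwa [mul_one, ZMod.natCast_self]
  constructor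
  · rintro rfl m
    exact (coeff_two_mul_substPS_sq hg0 Q m).symm
  · intro hQ
    ext n
    obtain ⟨m, rfl | rfl⟩ := Nat.even_or_odd' n
    · rw [coeff_two_mul_substPS_sq hg0, hQ]
    · have hodd := odd_two_mul_add_one m
      rw [hheven _ hodd,
        coeff_substPS_eq_zero_of_natCast_ne hsq_even Q (ZMod.natCast_ne_zero_iff_odd.2 hodd)]

/-- If `g` is an odd power series with linear coefficient `1`, then every even power
series `h` can be written uniquely as `Q∘(g²)`, and moreover the constant term of `Q`
equals the constant term of `h`. -/
theorem statement4 {R : Type*} [CommRing R] (g h : PowerSeries R)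
    (hgodd : ∀ n, Even n → PowerSeries.coeff n g = 0)
    (hg1 : PowerSeries.coeff 1 g = 1)
    (hheven : ∀ n, Odd n → PowerSeries.coeff n h = 0) :
    (∃! Q : PowerSeries R, h = substPS (g ^ 2) Q) ∧
      ∀ Q : PowerSeries R, h = substPS (g ^ 2) Q →
        PowerSeries.constantCoeff Q = PowerSeries.constantCoeff h := by
  have hg0 : constantCoeff g = 0 := by simpa using hgodd 0 Even.zero
  obtain ⟨c, hc, hc_unique⟩ :=
    existsUnique_forall_sum_range_succ_mul_eq (fun k m => coeff (2 * m) (g ^ (2 * k)))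
      (fun m => coeff (2 * m) h) fun m => by rw [coeff_self_pow hg0, hg1, one_pow]
  have hsolution : ∀ Q, h = substPS (g ^ 2) Q ↔ (fun k => coeff k Q) = c := fun Q =>
    (eq_substPS_sq_iff hgodd hheven Q).trans ⟨hc_unique _, by rintro rfl; exact hc⟩
  refine ⟨⟨mk c, (hsolution _).2 (funext fun k => coeff_mk k c), fun Q hQ => ?_⟩, fun Q hQ => ?_⟩
  · ext k
    rw [coeff_mk, ← (hsolution Q).1 hQ]
  · simpa using (eq_substPS_sq_iff hgodd hheven Q).1 hQ 0
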